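/- arXiv:2103.11158 — 5 statements merged into one kernel-verified Lean document; each statement's English description precedes it below -/
import Mathlib

section
/- Every quotient group of a discrete p-toral group is discrete p-toral. -/
/-!
The image `T` of `S₀` in `S ⧸ N` is a quotient of `(ℤ/p^∞)^r`, and `(S ⧸ N) ⧸ T` is a quotient
of the finite `p`-group `S ⧸ S₀`. So everything reduces to showing that a quotient `B` of
`(ℤ/p^∞)^r` is again of the form `(ℤ/p^∞)^s`. For `r = 1` this holds because every proper
subgroup of `ℤ/p^∞` is its `p^n`-torsion, the kernel of the surjection `x ↦ p^n • x`. For the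
inductive step, the image `A` of the first factor is a quotient of `ℤ/p^∞` and `B ⧸ A` is a
quotient of `(ℤ/p^∞)^r`; since `ℤ/p^∞` is divisible, hence an injective `ℤ`-module, `A` splits
off and `B ≃+ A × B ⧸ A`.
-/
/-- ℚ/ℤ as an additive group. -/
abbrev QmodZ : Type := ℚ ⧸ AddSubgroup.zmultiples (1 : ℚ)

/-- The Prüfer p-group ℤ/p^∞, realized as the p-primary component of ℚ/ℤ,
written multiplicatively. -/
def Prufer (p : ℕ) [Fact p.Prime] : Type :=
  Multiplicative (AddCommGroup.primaryComponent QmodZ p)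

instance (p : ℕ) [Fact p.Prime] : CommGroup (Prufer p) :=
  Multiplicative.commGroup

/-- A group `S` is *discrete p-toral* if it has a normal subgroup `S₀` isomorphic to a
finite direct product of copies of `ℤ/p^∞` such that `S/S₀` is a finite `p`-group. -/
def IsDiscretePToral (p : ℕ) [Fact p.Prime] (S : Type*) [Group S] : Prop :=
  ∃ S₀ : Subgroup S, ∃ _ : S₀.Normal,
    (∃ r : ℕ, Nonempty (S₀ ≃* (Fin r → Prufer p))) ∧
    Finite (S ⧸ S₀) ∧ IsPGroup p (S ⧸ S₀)

open Function AddSubgroup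

theorem surjective_nsmul_of_primary_of_surjective_nsmul_prime {A : Type*} [AddCommGroup A]
    {p : ℕ} (hp : p.Prime) (htors : ∀ a : A, ∃ k, p ^ k • a = 0)
    (hdiv : Surjective fun b : A => p • b) {n : ℕ} (hn : n ≠ 0) :
    Surjective fun b : A => n • b := by
  obtain ⟨k, u, hu, rfl⟩ := Nat.exists_eq_pow_mul_and_not_dvd hn p hp.ne_one
  have hpow : ∀ k, Surjective fun b : A => p ^ k • b := by
    intro k
    induction k with
    | zero => exact fun b => ⟨b, by simp⟩
    | succ k ih =>
      intro a
      obtain ⟨b, rfl⟩ := ih a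
      obtain ⟨c, rfl⟩ := hdiv b
      exact ⟨c, by simp only [pow_succ, mul_smul]⟩
  intro a
  obtain ⟨j, hj⟩ := htors a
  have hcop : u.Coprime (addOrderOf a) :=
    (((hp.coprime_iff_not_dvd).2 hu).symm.pow_right j).coprime_dvd_right
      (addOrderOf_dvd_of_nsmul_eq_zero hj)
  obtain ⟨m, hm⟩ := exists_nsmul_eq_self_of_coprime hcop
  obtain ⟨b, hb⟩ := hpow k (m • a)
  refine ⟨b, ?_⟩
  simp only at hb ⊢
  rw [mul_comm, mul_smul, hb, smul_comm, hm]

theorem AddSubgroup.nonempty_addEquiv_prod_quotient_of_divisibleBy {G : Type*} [AddCommGroup G]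
    (A : AddSubgroup G) [DivisibleBy A ℤ] : Nonempty (G ≃+ A × G ⧸ A) := by
  obtain ⟨ρ, hρ⟩ := (Module.Baer.of_divisible A).extension_property_addMonoidHom A.subtype
    Subtype.val_injective (AddMonoidHom.id A)
  have hρA (a : A) : ρ a = a := DFunLike.congr_fun hρ a
  refine ⟨AddEquiv.ofBijective (ρ.prod (QuotientAddGroup.mk' A)) ⟨?_, ?_⟩⟩
  · rw [injective_iff_map_eq_zero]
    intro g hg
    obtain ⟨hρg, hmk⟩ := Prod.ext_iff.1 hg
    have hgA : g ∈ A := (QuotientAddGroup.eq_zero_iff g).1 hmk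
    simpa [hρA ⟨g, hgA⟩] using hρg
  · rintro ⟨a, q⟩
    obtain ⟨g, rfl⟩ := QuotientAddGroup.mk'_surjective A q
    exact ⟨g - ρ g + a, Prod.ext (by simp [hρA]) (by simp)⟩

abbrev AddPrufer (p : ℕ) [Fact p.Prime] : Type := AddCommGroup.primaryComponent QmodZ p

namespace AddPrufer

variable {p : ℕ} [Fact p.Prime]

lemma exists_pow_smul_eq_zero (x : AddPrufer p) : ∃ k, p ^ k • x = 0 :=
  x.2.imp fun _ hk => Subtype.ext hk

variable (p) in
def gen (n : ℕ) : AddPrufer p :=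
  ⟨(((p : ℚ) ^ n)⁻¹ : ℚ), n, by
    rw [← QuotientAddGroup.mk_nsmul, nsmul_eq_mul, Nat.cast_pow,
      mul_inv_cancel₀ (pow_ne_zero _ (Nat.cast_ne_zero.2 (Fact.out : p.Prime).ne_zero))]
    exact (QuotientAddGroup.eq_zero_iff _).2 (mem_zmultiples 1)⟩

lemma pow_smul_gen_add (k n : ℕ) : p ^ k • gen p (n + k) = gen p n := by
  apply Subtype.ext
  change p ^ k • ((((p : ℚ) ^ (n + k))⁻¹ : ℚ) : QmodZ) = (((p : ℚ) ^ n)⁻¹ : ℚ)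
  have hp : (p : ℚ) ≠ 0 := Nat.cast_ne_zero.2 (Fact.out : p.Prime).ne_zero
  rw [← QuotientAddGroup.mk_nsmul, nsmul_eq_mul, pow_add]
  push_cast
  field_simp

lemma addOrderOf_gen (n : ℕ) : addOrderOf (gen p n) = p ^ n := by
  have := AddCircle.addOrderOf_period_div (p := (1 : ℚ)) (pow_pos (Fact.out : p.Prime).pos n)
  rw [← AddSubgroup.addOrderOf_coe, ← this]
  change addOrderOf ((((p : ℚ) ^ n)⁻¹ : ℚ) : QmodZ) = _
  congr 2
  push_cast
  rw [one_div]

lemma mem_zmultiples_gen_of_pow_smul_eq_zero {n : ℕ} {x : AddPrufer p} (hx : p ^ n • x = 0) :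
    x ∈ zmultiples (gen p n) := by
  obtain ⟨q, hq⟩ := QuotientAddGroup.mk_surjective (x : QmodZ)
  have hx' : ((p ^ n • q : ℚ) : QmodZ) = 0 := by
    rw [QuotientAddGroup.mk_nsmul, hq]; exact congrArg Subtype.val hx
  obtain ⟨m, hm⟩ := (QuotientAddGroup.eq_zero_iff _).1 hx'
  refine ⟨m, Subtype.ext ?_⟩
  change m • ((((p : ℚ) ^ n)⁻¹ : ℚ) : QmodZ) = x
  have hp : ((p : ℚ) ^ n) ≠ 0 := pow_ne_zero _ (Nat.cast_ne_zero.2 (Fact.out : p.Prime).ne_zero)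
  rw [← hq, ← QuotientAddGroup.mk_zsmul]
  congr 1
  rw [zsmul_eq_mul, ← div_eq_mul_inv, div_eq_iff hp]
  simpa [nsmul_eq_mul, mul_comm] using hm

lemma ker_nsmulAddMonoidHom_pow (n : ℕ) :
    (nsmulAddMonoidHom (p ^ n) : AddPrufer p →+ AddPrufer p).ker = zmultiples (gen p n) := by
  ext x
  refine ⟨mem_zmultiples_gen_of_pow_smul_eq_zero, ?_⟩
  rintro ⟨c, rfl⟩
  change p ^ n • c • gen p n = 0
  rw [smul_comm, ← addOrderOf_gen n, addOrderOf_nsmul_eq_zero, smul_zero]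

lemma exists_addOrderOf_eq_pow (x : AddPrufer p) : ∃ n, addOrderOf x = p ^ n := by
  obtain ⟨k, hk⟩ := exists_pow_smul_eq_zero x
  obtain ⟨n, -, hn⟩ := (Nat.dvd_prime_pow Fact.out).1 (addOrderOf_dvd_of_nsmul_eq_zero hk)
  exact ⟨n, hn⟩

lemma zmultiples_eq_zmultiples_gen {n : ℕ} {x : AddPrufer p} (hx : addOrderOf x = p ^ n) :
    zmultiples x = zmultiples (gen p n) := by
  have hcard : Nat.card (zmultiples (gen p n)) = p ^ n := by
    rw [Nat.card_zmultiples, addOrderOf_gen]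
  have : Finite (zmultiples (gen p n)) :=
    Nat.finite_of_card_ne_zero (hcard ▸ pow_ne_zero _ (Fact.out : p.Prime).ne_zero)
  refine eq_of_le_of_card_ge ?_ (by rw [hcard, Nat.card_zmultiples, hx])
  exact zmultiples_le.2 (mem_zmultiples_gen_of_pow_smul_eq_zero (hx ▸ addOrderOf_nsmul_eq_zero x))

lemma gen_mem_zmultiples_gen {k n : ℕ} (hkn : k ≤ n) : gen p k ∈ zmultiples (gen p n) := by
  obtain ⟨j, rfl⟩ := Nat.exists_eq_add_of_le hkn
  rw [← pow_smul_gen_add j k]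
  exact AddSubgroup.nsmul_mem _ (mem_zmultiples _) _

theorem eq_top_or_exists_eq_zmultiples_gen (H : AddSubgroup (AddPrufer p)) :
    H = ⊤ ∨ ∃ n, H = zmultiples (gen p n) := by
  classical
  by_cases hgen : ∀ k, gen p k ∈ H
  · refine Or.inl (eq_top_iff.2 fun x _ => ?_)
    obtain ⟨k, hk⟩ := exists_pow_smul_eq_zero x
    exact zmultiples_le.2 (hgen k) (mem_zmultiples_gen_of_pow_smul_eq_zero hk)
  obtain ⟨k, hk⟩ := not_forall.1 hgen
  have hlt : ∀ x ∈ H, ∀ j, addOrderOf x = p ^ j → j < k := by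
    intro x hx j hj
    by_contra! hkj
    exact hk <| zmultiples_le.2 hx <|
      (zmultiples_eq_zmultiples_gen hj).symm ▸ gen_mem_zmultiples_gen hkj
  -- all orders in `H` are below `p ^ k`, so `H` is generated by an element of maximal order
  let n := Nat.findGreatest (fun j => ∃ x ∈ H, addOrderOf x = p ^ j) k
  obtain ⟨x, hxH, hx⟩ : ∃ x ∈ H, addOrderOf x = p ^ n :=
    Nat.findGreatest_spec (P := fun j => ∃ x ∈ H, addOrderOf x = p ^ j) (Nat.zero_le k)
      ⟨0, H.zero_mem, by simp⟩
  refine Or.inr ⟨n, le_antisymm (fun y hy => ?_) ?_⟩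
  · obtain ⟨j, hj⟩ := exists_addOrderOf_eq_pow y
    have hjn : j ≤ n := Nat.le_findGreatest (hlt y hy j hj).le ⟨y, hy, hj⟩
    refine mem_zmultiples_gen_of_pow_smul_eq_zero ?_
    rw [← Nat.sub_add_cancel hjn, pow_add, mul_smul, ← hj, addOrderOf_nsmul_eq_zero, smul_zero]
  · rw [← zmultiples_eq_zmultiples_gen hx]
    exact zmultiples_le.2 hxH

lemma surjective_nsmul_p : Surjective fun y : AddPrufer p => p • y := by
  intro x
  obtain ⟨k, hk⟩ := exists_pow_smul_eq_zero x
  obtain ⟨c, rfl⟩ := mem_zmultiples_gen_of_pow_smul_eq_zero hk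
  refine ⟨c • gen p (k + 1), ?_⟩
  have hgen : p • gen p (k + 1) = gen p k := by simpa using pow_smul_gen_add (p := p) 1 k
  simp only [smul_comm p c, hgen]

noncomputable instance : DivisibleBy (AddPrufer p) ℕ :=
  divisibleByOfSMulRightSurj _ _ fun hn =>
    surjective_nsmul_of_primary_of_surjective_nsmul_prime Fact.out exists_pow_smul_eq_zero
      surjective_nsmul_p hn

noncomputable instance : DivisibleBy (AddPrufer p) ℤ :=
  AddGroup.divisibleByIntOfDivisibleByNat _

end AddPrufer

section

variable {p : ℕ} [Fact p.Prime]

variable (p) in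
def IsPruferPower (B : Type*) [AddCommGroup B] : Prop :=
  ∃ s : ℕ, Nonempty (B ≃+ (Fin s → AddPrufer p))

namespace IsPruferPower

variable {B : Type*} [AddCommGroup B]

lemma of_subsingleton [Subsingleton B] : IsPruferPower p B :=
  have : Unique B := uniqueOfSubsingleton 0
  ⟨0, ⟨AddEquiv.ofUnique⟩⟩

lemma of_surjective_prufer (f : AddPrufer p →+ B) (hf : Surjective f) : IsPruferPower p B := by
  let e : (AddPrufer p ⧸ f.ker) ≃+ B := QuotientAddGroup.quotientKerEquivOfSurjective f hf
  rcases AddPrufer.eq_top_or_exists_eq_zmultiples_gen f.ker with htop | ⟨n, hn⟩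
  · have : Subsingleton (AddPrufer p ⧸ f.ker) :=
      htop ▸ QuotientAddGroup.subsingleton_quotient_top
    have : Subsingleton B := e.symm.injective.subsingleton
    exact of_subsingleton
  · let φ : AddPrufer p →+ AddPrufer p := nsmulAddMonoidHom (p ^ n)
    have hφ : Surjective φ :=
      DivisibleBy.surjective_smul _ _ (pow_ne_zero n (Fact.out : p.Prime).ne_zero)
    have hker : f.ker = φ.ker := hn.trans (AddPrufer.ker_nsmulAddMonoidHom_pow n).symm
    exact ⟨1, ⟨e.symm.trans <| (QuotientAddGroup.quotientAddEquivOfEq hker).trans <|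
      (QuotientAddGroup.quotientKerEquivOfSurjective φ hφ).trans (AddEquiv.funUnique _ _).symm⟩⟩

lemma of_addSubgroup {A : AddSubgroup B} (hA : IsPruferPower p A)
    (hQ : IsPruferPower p (B ⧸ A)) : IsPruferPower p B := by
  obtain ⟨a, ⟨eA⟩⟩ := hA
  obtain ⟨b, ⟨eQ⟩⟩ := hQ
  have : DivisibleBy A ℤ := eA.symm.surjective.divisibleBy _ fun x n => map_zsmul eA.symm n x
  obtain ⟨e⟩ := A.nonempty_addEquiv_prod_quotient_of_divisibleBy
  let eSum : (Fin (a + b) → AddPrufer p) ≃+ (Fin a → AddPrufer p) × (Fin b → AddPrufer p) :=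
    ((LinearEquiv.funCongrLeft ℤ _ finSumFinEquiv).trans
      (LinearEquiv.sumPiEquivProdPi ℤ _ _ fun _ => AddPrufer p)).toAddEquiv
  exact ⟨a + b, ⟨e.trans ((eA.prodCongr eQ).trans eSum.symm)⟩⟩

theorem of_surjective {r : ℕ} (f : (Fin r → AddPrufer p) →+ B) (hf : Surjective f) :
    IsPruferPower p B := by
  induction r generalizing B with
  | zero =>
    have : Subsingleton B := hf.subsingleton
    exact of_subsingleton
  | succ r ih =>
    let g := f.comp (Fin.consLinearEquiv ℤ fun _ => AddPrufer p).toAddMonoidHom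
    have hg : Surjective g := hf.comp (Fin.consLinearEquiv ℤ _).surjective
    let A := (g.comp (AddMonoidHom.inl _ _)).range
    refine of_addSubgroup (A := A)
      (of_surjective_prufer _ (AddMonoidHom.rangeRestrict_surjective _))
      (ih ((QuotientAddGroup.mk' A).comp (g.comp (AddMonoidHom.inr _ _))) ?_)
    intro q
    obtain ⟨⟨x, y⟩, rfl⟩ := (QuotientAddGroup.mk'_surjective A).comp hg q
    refine ⟨y, QuotientAddGroup.eq_iff_sub_mem.2 ⟨-x, ?_⟩⟩
    simp [g, ← map_sub]

end IsPruferPower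

theorem exists_mulEquiv_map_pi_prufer {G H : Type*} [Group G] [Group H] {K : Subgroup G}
    {r : ℕ} (e : K ≃* (Fin r → Prufer p)) (f : G →* H) :
    ∃ s : ℕ, Nonempty (K.map f ≃* (Fin s → Prufer p)) := by
  let g : (Fin r → Prufer p) →* H := f.comp (K.subtype.comp e.symm.toMonoidHom)
  have hg : g.range = K.map f := by
    simp [g, MonoidHom.range_comp, ← MonoidHom.range_eq_map]
  let q : (Fin r → AddPrufer p) →+ Additive ((Fin r → Prufer p) ⧸ g.ker) :=
    MonoidHom.toAdditiveRight
      ((QuotientGroup.mk' g.ker).comp (MulEquiv.piMultiplicative _).toMonoidHom)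
  have hq : Surjective q :=
    (QuotientGroup.mk'_surjective g.ker).comp (MulEquiv.piMultiplicative _).surjective
  obtain ⟨s, ⟨eQ⟩⟩ := IsPruferPower.of_surjective q hq
  exact ⟨s, ⟨(MulEquiv.subgroupCongr hg.symm).trans <|
    (QuotientGroup.quotientKerEquivRange g).symm.trans <|
      (AddEquiv.toMultiplicativeRight eQ).trans (MulEquiv.piMultiplicative _)⟩⟩

end

/-- Every quotient group of a discrete `p`-toral group is discrete `p`-toral. -/
theorem isDiscretePToral_quotient (p : ℕ) [Fact p.Prime] (S : Type*) [Group S]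
    (hS : IsDiscretePToral p S) (N : Subgroup S) [N.Normal] :
    IsDiscretePToral p (S ⧸ N) := by
  obtain ⟨S₀, _, ⟨r, ⟨e⟩⟩, hfin, hpg⟩ := hS
  let π := QuotientGroup.mk' N
  have hπ : Surjective π := QuotientGroup.mk'_surjective N
  let φ : S ⧸ S₀ →* (S ⧸ N) ⧸ S₀.map π := QuotientGroup.map _ _ π (Subgroup.le_comap_map π S₀)
  have hφ : Surjective φ :=
    QuotientGroup.map_surjective_of_surjective _ _ _ (QuotientGroup.mk_surjective.comp hπ) _
  exact ⟨S₀.map π, inferInstance, exists_mulEquiv_map_pi_prufer e π,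
    Finite.of_surjective φ hφ, hpg.of_surjective φ hφ⟩
end

section
/- Let S be a discrete p-toral group with identity component S₀. Define inductively normal subgroups Z̃ₙ(S) by Z̃₀(S) = 1 and Z̃ₙ(S)/Z̃ₙ₋₁(S) = Ω₁(Z(S/Z̃ₙ₋₁(S))) (the subgroup of the center of S/Z̃ₙ₋₁(S) generated by elements of order dividing p). Set Z̃∞(S) = ⋃ₙ Z̃ₙ(S). Then Z̃∞(S) ⊇ S₀ and C_S(Z̃∞(S)) ≤ Z̃∞(S). -/
/-- `Ω₁(Z(G))`: the subgroup of the center of `G` generated by the elements `x`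
with `x ^ p = 1`. -/
def omegaOneCenter (p : ℕ) (G : Type*) [Group G] : Subgroup G :=
  Subgroup.closure {x : G | x ∈ Subgroup.center G ∧ x ^ p = 1}

theorem omegaOneCenter_le_center (p : ℕ) (G : Type*) [Group G] :
    omegaOneCenter p G ≤ Subgroup.center G :=
  (Subgroup.closure_le _).2 fun _ hx => hx.1

instance omegaOneCenter_normal (p : ℕ) (G : Type*) [Group G] :
    (omegaOneCenter p G).Normal := by
  constructor
  intro n hn g
  have hc := Subgroup.mem_center_iff.mp (omegaOneCenter_le_center p G hn) g
  rw [hc, mul_inv_cancel_right]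
  exact hn

/-- The ascending chain `Z̃ₙ(S)`: `Z̃₀(S) = 1` and
`Z̃ₙ(S)/Z̃ₙ₋₁(S) = Ω₁(Z(S/Z̃ₙ₋₁(S)))`, packaged with a proof of normality. -/
def ZtilAux (p : ℕ) (S : Type*) [Group S] : ℕ → {H : Subgroup S // H.Normal}
  | 0 => ⟨⊥, inferInstance⟩
  | n + 1 =>
    let Z := ZtilAux p S n
    haveI := Z.2
    ⟨(omegaOneCenter p (S ⧸ Z.1)).comap (QuotientGroup.mk' Z.1),
      Subgroup.Normal.comap (omegaOneCenter_normal p _) _⟩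

/-- `Z̃ₙ(S)`, as a subgroup of `S`. -/
def Ztil (p : ℕ) (S : Type*) [Group S] (n : ℕ) : Subgroup S := (ZtilAux p S n).1

/-!
A finite normal subgroup `N` of a `p`-group `S` lies in some `Z̃ₙ(S)`: as long as `N ≰ Z̃ₙ(S)`,
the image of `N` in the `p`-group `S/Z̃ₙ(S)` is a nontrivial finite normal subgroup, so it meets
the center in an element of order `p`, and `N ∩ Z̃ₙ(S)` grows strictly. Since `S₀` is abelian with
finite `p^k`-torsion, it is a union of finite normal subgroups of `S`, hence `S₀ ≤ Z̃∞(S)`.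

So `S/Z̃∞(S)` is a finite `p`-group. If `C = C_S(Z̃∞(S)) ≰ Z̃∞(S)`, some `c ∈ C ∖ Z̃∞(S)` becomes
central of order `p` modulo `Z̃∞(S)`. Since `c` centralizes `Z̃∞(S)`, the elements commuting with
`c` modulo `Z̃ₙ(S)` form subgroups containing `Z̃∞(S)` which exhaust `S`; as `S/Z̃∞(S)` is finite,
one of them is all of `S`. So for large `n` the image of `c` in `S/Z̃ₙ(S)` is central of order `p`,
i.e. `c ∈ Z̃ₙ₊₁(S)`: a contradiction.
-/

open Subgroup QuotientGroup

section PGroup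

variable {p : ℕ} {G : Type*} [Group G]

theorem IsPGroup.of_quotient {N : Subgroup G} [N.Normal] (hN : IsPGroup p N)
    (hG : IsPGroup p (G ⧸ N)) : IsPGroup p G := by
  have h := (hG.to_subgroup ⊤).comap_of_ker_isPGroup (mk' N) (by rwa [ker_mk'])
  rw [comap_top] at h
  exact h.of_equiv topEquiv

theorem isPGroup_pi {ι : Type*} [Finite ι] {H : ι → Type*} [∀ i, Group (H i)]
    (h : ∀ i, IsPGroup p (H i)) : IsPGroup p (∀ i, H i) := by
  intro v
  choose k hk using fun i => h i (v i)
  obtain ⟨m, hm⟩ := Finite.exists_le k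
  refine ⟨m, funext fun i => ?_⟩
  obtain ⟨d, hd⟩ := pow_dvd_pow p (hm i)
  rw [Pi.pow_apply, hd, pow_mul, hk i, one_pow, Pi.one_apply]

variable [Fact p.Prime]

theorem IsPGroup.exists_mem_center_pow_eq_one (hG : IsPGroup p G) (M : Subgroup G) [M.Normal]
    [Finite M] (hM : M ≠ ⊥) : ∃ a ∈ M, a ∈ center G ∧ a ^ p = 1 ∧ a ≠ 1 := by
  have hpM : p ∣ Nat.card M :=
    (hG.to_subgroup M).card_eq_or_dvd.resolve_left fun h => hM (eq_bot_of_card_eq M h)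
  obtain ⟨b, hb, hb1⟩ :=
    (hG.of_equiv ConjAct.toConjAct).exists_fixed_point_of_prime_dvd_card_of_fixed_point M hpM
      (a := 1) fun g => smul_one g
  have hbZ : (b : G) ∈ M ⊓ center G := by
    refine ⟨b.2, mem_center_iff.2 fun g => ?_⟩
    have hconj := congrArg Subtype.val (hb (ConjAct.toConjAct g))
    rw [ConjAct.Subgroup.val_conj_smul, ConjAct.smul_def, ConjAct.ofConjAct_toConjAct] at hconj
    exact mul_inv_eq_iff_eq_mul.1 hconj
  have : Finite (M ⊓ center G : Subgroup G) :=
    Finite.of_injective _ (inclusion_injective (inf_le_left : M ⊓ center G ≤ M))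
  have hpZ : p ∣ Nat.card (M ⊓ center G : Subgroup G) := by
    refine (hG.to_subgroup _).card_eq_or_dvd.resolve_left fun h => hb1 ?_
    have := (eq_bot_of_card_eq _ h) ▸ hbZ
    exact Subtype.ext (mem_bot.1 this).symm
  obtain ⟨a, ha⟩ := exists_prime_orderOf_dvd_card' p hpZ
  rw [← orderOf_submonoid] at ha
  refine ⟨a, a.2.1, a.2.2, ha ▸ pow_orderOf_eq_one (a : G), fun h1 => ?_⟩
  rw [h1, orderOf_one] at ha
  exact (Fact.out : p.Prime).one_lt.ne ha

theorem IsPGroup.exists_mem_notMem_of_not_le (hG : IsPGroup p G) {K N : Subgroup G} [K.Normal]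
    [hN : N.Normal] [Finite (N.map (mk' K))] (hNK : ¬ N ≤ K) :
    ∃ x ∈ N, x ∉ K ∧ (x : G ⧸ K) ∈ center (G ⧸ K) ∧ (x : G ⧸ K) ^ p = 1 := by
  have : (N.map (mk' K)).Normal := hN.map _ (mk'_surjective K)
  have hM : N.map (mk' K) ≠ ⊥ := by rwa [Ne, Subgroup.map_eq_bot_iff, ker_mk']
  obtain ⟨_, ⟨x, hxN, rfl⟩, hc, hp, h1⟩ := (hG.to_quotient K).exists_mem_center_pow_eq_one _ hM
  exact ⟨x, hxN, fun hx => h1 ((eq_one_iff x).2 hx), hc, hp⟩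

end PGroup

theorem Subgroup.exists_eq_top_of_monotone {G ι : Type*} [Group G] [Preorder ι] [IsDirectedOrder ι]
    [Nonempty ι] {K : Subgroup G} [Finite (G ⧸ K)] {H : ι → Subgroup G} (hmono : Monotone H)
    (hK : ∀ i, K ≤ H i) (hcover : ∀ g, ∃ i, g ∈ H i) : ∃ i, H i = ⊤ := by
  choose i hi using fun t : G ⧸ K => hcover t.out
  obtain ⟨j, hj⟩ := Finite.exists_le i
  refine ⟨j, eq_top_iff.2 fun g _ => ?_⟩
  obtain ⟨k, hk⟩ := mk_out_eq_mul K g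
  rw [← mul_inv_cancel_right g k, ← hk]
  exact mul_mem (hmono (hj _) (hi _)) (inv_mem (hK j k.2))

theorem Subgroup.mem_comap_centralizer_mk_iff {G : Type*} [Group G] {K : Subgroup G} [K.Normal]
    {c g : G} : g ∈ (centralizer {(c : G ⧸ K)}).comap (mk' K) ↔ (g * c)⁻¹ * (c * g) ∈ K := by
  rw [mem_comap, mem_centralizer_singleton_iff, mk'_apply, ← mk_mul, ← mk_mul, QuotientGroup.eq]

section Prufer

variable (p : ℕ) [Fact p.Prime]

theorem isPGroup_prufer : IsPGroup p (Prufer p) := fun u =>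
  (Multiplicative.toAdd u).2.imp fun _ hk => Multiplicative.toAdd.injective <| Subtype.ext hk

theorem finite_setOf_pow_eq_one_prufer {q : ℕ} (hq : 0 < q) :
    {u : Prufer p | u ^ q = 1}.Finite := by
  let f : Prufer p → QmodZ := fun u =>
    (Multiplicative.toAdd (α := AddCommGroup.primaryComponent QmodZ p) u : QmodZ)
  have hf : f.Injective := Subtype.val_injective.comp Multiplicative.toAdd.injective
  exact ((AddCircle.finite_torsion (1 : ℚ) hq).preimage hf.injOn).subset fun u hu => congrArg f hu

end Prufer

theorem Set.Finite.setOf_pow_eq_one_pi {ι M : Type*} [Finite ι] [Monoid M] {q : ℕ}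
    (h : {u : M | u ^ q = 1}.Finite) : {v : ι → M | v ^ q = 1}.Finite :=
  (Set.Finite.pi fun _ => h).subset fun _ hv i _ => congrFun hv i

theorem Subgroup.exists_finite_normal_mem_of_pow_eq_one {S A : Type*} [Group S] [CommGroup A]
    {S₀ : Subgroup S} [hS₀ : S₀.Normal] (e : S₀ ≃* A) {q : ℕ} (hA : {a : A | a ^ q = 1}.Finite)
    {x : S} (hx : x ∈ S₀) (hxq : x ^ q = 1) : ∃ N : Subgroup S, N.Normal ∧ Finite N ∧ x ∈ N := by
  have hcomm : ∀ a ∈ S₀, ∀ b ∈ S₀, Commute a b := fun a ha b hb =>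
    congrArg Subtype.val (e.injective (by rw [map_mul, map_mul, mul_comm]) :
      (⟨a, ha⟩ * ⟨b, hb⟩ : S₀) = ⟨b, hb⟩ * ⟨a, ha⟩)
  let N : Subgroup S :=
    { carrier := {y | y ∈ S₀ ∧ y ^ q = 1}
      one_mem' := ⟨S₀.one_mem, one_pow q⟩
      mul_mem' := fun ⟨ha, haq⟩ ⟨hb, hbq⟩ =>
        ⟨S₀.mul_mem ha hb, by rw [(hcomm _ ha _ hb).mul_pow, haq, hbq, one_mul]⟩
      inv_mem' := fun ⟨ha, haq⟩ => ⟨S₀.inv_mem ha, by rw [inv_pow, haq, inv_one]⟩ }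
  have hNfin : (N : Set S).Finite := by
    refine (hA.image fun a => (e.symm a : S)).subset fun y ⟨hy, hyq⟩ => ⟨e ⟨y, hy⟩, ?_, by simp⟩
    show e ⟨y, hy⟩ ^ q = 1
    rw [← map_pow, ← map_one e]
    exact congrArg e (Subtype.ext hyq)
  refine ⟨N, ⟨fun y ⟨hy, hyq⟩ g => ⟨hS₀.conj_mem y hy g, ?_⟩⟩, hNfin.to_subtype, hx, hxq⟩
  rw [conj_pow, hyq, mul_one, mul_inv_cancel]

section Ztil

variable (p : ℕ) (S : Type*) [Group S]

instance Ztil_normal (n : ℕ) : (Ztil p S n).Normal := (ZtilAux p S n).2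

variable {p S}

theorem mem_Ztil_succ_of {n : ℕ} {x : S} (hc : (x : S ⧸ Ztil p S n) ∈ center (S ⧸ Ztil p S n))
    (hp : (x : S ⧸ Ztil p S n) ^ p = 1) : x ∈ Ztil p S (n + 1) :=
  show x ∈ (omegaOneCenter p (S ⧸ Ztil p S n)).comap (mk' (Ztil p S n)) from
    subset_closure ⟨hc, hp⟩

theorem Ztil_mono : Monotone (Ztil p S) :=
  monotone_nat_of_le_succ fun n x hx => by
    rw [← eq_one_iff] at hx
    exact mem_Ztil_succ_of (hx ▸ one_mem _) (by rw [hx, one_pow])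

theorem mem_iSup_Ztil {x : S} : x ∈ (⨆ n, Ztil p S n) ↔ ∃ n, x ∈ Ztil p S n :=
  mem_iSup_of_directed Ztil_mono.directed_le

variable [Fact p.Prime]

theorem IsPGroup.exists_le_Ztil (hS : IsPGroup p S) (N : Subgroup S) [N.Normal] [Finite N] :
    ∃ n, N ≤ Ztil p S n := by
  let chain : ℕ →o Set N :=
    ⟨fun n => Subtype.val ⁻¹' (Ztil p S n : Set S), fun _ _ h => Set.preimage_mono (Ztil_mono h)⟩
  obtain ⟨n, hn⟩ := WellFoundedGT.monotone_chain_condition chain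
  refine ⟨n, by_contra fun hle => ?_⟩
  have : Finite (N.map (mk' (Ztil p S n))) := Finite.Set.finite_image (N : Set S) _
  obtain ⟨x, hxN, hxn, hc, hp⟩ := hS.exists_mem_notMem_of_not_le hle
  have hx : (⟨x, hxN⟩ : N) ∈ chain (n + 1) := mem_Ztil_succ_of hc hp
  rw [← hn (n + 1) n.le_succ] at hx
  exact hxn hx

theorem IsPGroup.le_iSup_Ztil {ι : Type*} [Finite ι] (hS : IsPGroup p S) {S₀ : Subgroup S}
    [S₀.Normal] (e : S₀ ≃* (ι → Prufer p)) : S₀ ≤ ⨆ n, Ztil p S n := by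
  intro x hx
  obtain ⟨k, hk⟩ := (isPGroup_pi fun _ => isPGroup_prufer p).of_equiv e.symm ⟨x, hx⟩
  obtain ⟨N, hN, hNfin, hxN⟩ := exists_finite_normal_mem_of_pow_eq_one e
    (finite_setOf_pow_eq_one_prufer p (pow_pos (Fact.out : p.Prime).pos k)).setOf_pow_eq_one_pi hx
    (congrArg Subtype.val hk)
  obtain ⟨n, hn⟩ := hS.exists_le_Ztil N
  exact mem_iSup_Ztil.2 ⟨n, hn hxN⟩

theorem IsPGroup.centralizer_iSup_Ztil_le (hS : IsPGroup p S)
    [Finite (S ⧸ ⨆ n, Ztil p S n)] :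
    centralizer ((⨆ n, Ztil p S n : Subgroup S) : Set S) ≤ ⨆ n, Ztil p S n := by
  set W := ⨆ n, Ztil p S n
  by_contra hCW
  obtain ⟨c, hcC, hcW, hcZ, hcp⟩ := hS.exists_mem_notMem_of_not_le hCW
  apply hcW
  obtain ⟨n₀, hn₀⟩ := mem_iSup_Ztil.1 ((eq_one_iff _).1 (by rwa [mk_pow]) : c ^ p ∈ W)
  let H : ℕ → Subgroup S := fun n => (centralizer {(c : S ⧸ Ztil p S n)}).comap (mk' _)
  have hmono : Monotone H := fun m n hmn g hg =>
    mem_comap_centralizer_mk_iff.2 (Ztil_mono hmn (mem_comap_centralizer_mk_iff.1 hg))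
  have hW : ∀ n, W ≤ H n := fun n w hw => mem_comap_centralizer_mk_iff.2 <| by
    rw [mem_centralizer_iff.1 hcC w hw, inv_mul_cancel]
    exact one_mem _
  have hcover : ∀ g, ∃ n, g ∈ H n := fun g =>
    (mem_iSup_Ztil.1 (mem_comap_centralizer_mk_iff.1
      (mem_centralizer_singleton_iff.2 (mem_center_iff.1 hcZ g)))).imp
      fun _ => mem_comap_centralizer_mk_iff.2
  obtain ⟨n₁, hn₁⟩ := exists_eq_top_of_monotone hmono hW hcover
  refine mem_iSup_Ztil.2 ⟨max n₀ n₁ + 1, mem_Ztil_succ_of ?_ ?_⟩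
  · refine mem_center_iff.2 fun g => ?_
    induction g using QuotientGroup.induction_on with | H g => ?_
    exact mem_centralizer_singleton_iff.1 (hmono (le_max_right _ _) (hn₁ ▸ mem_top g))
  · rw [← mk_pow, eq_one_iff]
    exact Ztil_mono (le_max_left _ _) hn₀

end Ztil

/-- Let `S` be a discrete `p`-toral group with identity component `S₀`. Then
`Z̃∞(S) = ⋃ₙ Z̃ₙ(S)` contains `S₀` and contains its own centralizer. -/
theorem Ztil_infty_ge_component_and_self_centralizing
    (p : ℕ) [Fact p.Prime] (S : Type*) [Group S]
    (S₀ : Subgroup S) (hnorm : S₀.Normal)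
    (hconn : ∃ r : ℕ, Nonempty (S₀ ≃* (Fin r → Prufer p)))
    (hfin : Finite (S ⧸ S₀)) (hpg : IsPGroup p (S ⧸ S₀)) :
    S₀ ≤ (⨆ n, Ztil p S n) ∧
      Subgroup.centralizer ((⨆ n, Ztil p S n : Subgroup S) : Set S) ≤ ⨆ n, Ztil p S n := by
  obtain ⟨r, ⟨e⟩⟩ := hconn
  have hS : IsPGroup p S :=
    ((isPGroup_pi fun _ => isPGroup_prufer p).of_equiv e.symm).of_quotient hpg
  have hS₀ : S₀ ≤ ⨆ n, Ztil p S n := hS.le_iSup_Ztil e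
  have : S₀.FiniteIndex := finiteIndex_iff_finite_quotient.2 hfin
  have := finiteIndex_of_le hS₀
  exact ⟨hS₀, hS.centralizer_iSup_Ztil_le⟩
end

section
/- An endomorphism f of a group G is normal (i.e., commutes with all inner automorphisms of G) if and only if there exists an endomorphism χ of G such that [f(G), χ(G)] = 1 and f(x)χ(x) = x for all x ∈ G. -/
/-!
If `f` is normal, then `x` and `f x` act by the same conjugation on `f(G)`, so `(f x)⁻¹ * x`
centralizes `f(G)`; this is exactly what makes `χ x := (f x)⁻¹ * x` multiplicative.
Conversely, `x = f x * χ x` with `χ x` centralizing `f(G)`, so conjugation by `x` acts on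
`f(G)` as conjugation by `f x`, which `f` commutes with.
-/

namespace MonoidHom

variable {G : Type*} [Group G] (f : G →* G)

theorem commute_inv_mul_self_of_map_conj (hf : ∀ g x : G, f (g * x * g⁻¹) = g * f x * g⁻¹)
    (x y : G) : Commute ((f x)⁻¹ * x) (f y) := by
  have hconj : x * f y * x⁻¹ = f x * f y * (f x)⁻¹ := by simpa using (hf x y).symm
  calc (f x)⁻¹ * x * f y = (f x)⁻¹ * (x * f y * x⁻¹) * x := by group
    _ = (f x)⁻¹ * (f x * f y * (f x)⁻¹) * x := by rw [hconj]
    _ = f y * ((f x)⁻¹ * x) := by group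

def complement (hf : ∀ x y : G, Commute ((f x)⁻¹ * x) (f y)) : G →* G where
  toFun x := (f x)⁻¹ * x
  map_one' := by simp
  map_mul' x y :=
    calc (f (x * y))⁻¹ * (x * y) = (f y)⁻¹ * ((f x)⁻¹ * x) * y := by simp [mul_assoc]
      _ = (f x)⁻¹ * x * (f y)⁻¹ * y := by rw [((hf x y).inv_right).eq]
      _ = (f x)⁻¹ * x * ((f y)⁻¹ * y) := mul_assoc _ _ _

theorem mul_complement_apply (hf : ∀ x y : G, Commute ((f x)⁻¹ * x) (f y)) (x : G) :
    f x * f.complement hf x = x :=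
  mul_inv_cancel_left (f x) x

theorem map_conj_of_mul_eq_self (χ : G →* G) (hcomm : ∀ x y : G, Commute (f x) (χ y))
    (hfχ : ∀ x : G, f x * χ x = x) (g x : G) : f (g * x * g⁻¹) = g * f x * g⁻¹ :=
  calc f (g * x * g⁻¹) = f g * f x * (f g)⁻¹ := by simp
    _ = f g * χ g * f x * (f g * χ g)⁻¹ := by
      rw [mul_assoc (f g) (χ g), ← (hcomm x g).eq]; group
    _ = g * f x * g⁻¹ := by rw [hfχ]

end MonoidHom

/-- An endomorphism `f` of a group `G` is normal (commutes with all inner automorphisms)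
iff there is an endomorphism `χ` of `G` with `[f(G), χ(G)] = 1` and `f(x)χ(x) = x` for
all `x ∈ G`. -/
theorem normal_endomorphism_iff_complement (G : Type*) [Group G] (f : G →* G) :
    (∀ g x : G, f (g * x * g⁻¹) = g * f x * g⁻¹) ↔
      ∃ χ : G →* G, (∀ x y : G, f x * χ y = χ y * f x) ∧ ∀ x : G, f x * χ x = x := by
  constructor
  · intro hf
    have hcomm := f.commute_inv_mul_self_of_map_conj hf
    exact ⟨f.complement hcomm, fun x y => (hcomm y x).symm, f.mul_complement_apply hcomm⟩
  · rintro ⟨χ, hcomm, hfχ⟩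
    exact f.map_conj_of_mul_eq_self χ hcomm hfχ
end

section
/- Let G be a group, and let f be a surjective endomorphism of G such that there exists an endomorphism χ of G with [f(G), χ(G)] = 1 and f(x)χ(x) = x for all x ∈ G. Then f(x)x⁻¹ ∈ Z(G) for all x ∈ G and f restricts to the identity on the commutator subgroup [G,G]. -/
/-!
Since `f` is onto, every `χ x` commutes with all of `f(G) = G`, so it is central, and
`f x = (χ x)⁻¹ x` differs from `x` by a central factor. Commutators do not see central
factors, hence `f ⁅x, y⁆ = ⁅f x, f y⁆ = ⁅x, y⁆`, and `f` fixes the subgroup they generate.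
-/

open scoped commutatorElement

theorem Subgroup.mem_center_of_commute_of_surjective {G H : Type*} [Group G] [Monoid H]
    {f : H →* G} (hf : Function.Surjective f) {a : G} (h : ∀ y, f y * a = a * f y) :
    a ∈ Subgroup.center G :=
  Subgroup.mem_center_iff.mpr fun g ↦ by
    obtain ⟨y, rfl⟩ := hf g
    exact h y

theorem commutatorElement_mul_center_left {G : Type*} [Group G] {a : G}
    (ha : a ∈ Subgroup.center G) (x y : G) : ⁅a * x, y⁆ = ⁅x, y⁆ := by
  have hay : ⁅a, y⁆ = 1 :=
    commutatorElement_eq_one_iff_mul_comm.mpr (Subgroup.mem_center_iff.mp ha y).symm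
  rw [commutatorElement_mul_left_eq_conj_mul, hay, mul_one,
    (Subgroup.mem_center_iff.mp ha _).symm, mul_inv_cancel_right]

theorem commutatorElement_mul_center {G : Type*} [Group G] {a b : G}
    (ha : a ∈ Subgroup.center G) (hb : b ∈ Subgroup.center G) (x y : G) :
    ⁅a * x, b * y⁆ = ⁅x, y⁆ := by
  rw [commutatorElement_mul_center_left ha, ← commutatorElement_inv,
    commutatorElement_mul_center_left hb, commutatorElement_inv]

namespace MonoidHom

variable {G : Type*} [Group G] {f : G →* G}

theorem map_commutatorElement_eq_of_mul_inv_mem_center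
    (hf : ∀ x, f x * x⁻¹ ∈ Subgroup.center G) (x y : G) : f ⁅x, y⁆ = ⁅x, y⁆ := by
  rw [map_commutatorElement, ← inv_mul_cancel_right (f x) x, ← inv_mul_cancel_right (f y) y,
    commutatorElement_mul_center (hf x) (hf y)]

theorem commutator_le_eqLocus_id_of_mul_inv_mem_center
    (hf : ∀ x, f x * x⁻¹ ∈ Subgroup.center G) : commutator G ≤ f.eqLocus (MonoidHom.id G) := by
  rw [commutator_def, Subgroup.commutator_le]
  exact fun x _ y _ ↦ map_commutatorElement_eq_of_mul_inv_mem_center hf x y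

end MonoidHom

/-- A surjective normal endomorphism `f` of `G` (i.e. one admitting `χ` with commuting
image and `f(x)χ(x) = x`) satisfies `f(x)x⁻¹ ∈ Z(G)` for all `x`, and restricts to the
identity on the commutator subgroup `[G,G]`. -/
theorem surjective_normal_endomorphism_center_and_commutator (G : Type*) [Group G]
    (f : G →* G) (hf : Function.Surjective f)
    (hχ : ∃ χ : G →* G, (∀ x y : G, f x * χ y = χ y * f x) ∧ ∀ x : G, f x * χ x = x) :
    (∀ x : G, f x * x⁻¹ ∈ Subgroup.center G) ∧ ∀ x ∈ commutator G, f x = x := by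
  obtain ⟨χ, hcomm, hfχ⟩ := hχ
  have hχ_center (x : G) : χ x ∈ Subgroup.center G :=
    Subgroup.mem_center_of_commute_of_surjective hf fun y ↦ hcomm y x
  have hf_mul_inv (x : G) : f x * x⁻¹ = (χ x)⁻¹ := by
    rw [mul_inv_eq_iff_eq_mul, eq_inv_mul_iff_mul_eq, ← hcomm x x, hfχ x]
  have hcenter (x : G) : f x * x⁻¹ ∈ Subgroup.center G :=
    hf_mul_inv x ▸ inv_mem (hχ_center x)
  exact ⟨hcenter, fun x hx ↦ f.commutator_le_eqLocus_id_of_mul_inv_mem_center hcenter hx⟩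
end

section
/- Let G be a group and f₁, f₂ endomorphisms of G such that [f₁(G), f₂(G)] = 1, f₁(x)f₂(x) = x for all x ∈ G, and both f₁ and f₂ are locally nilpotent. Then G is trivial. -/
/-!
If `f₁ x = 1` then `f₂ x = x`, so `x` is fixed by every power of `f₂`, and local nilpotence of `f₂`
forces `x = 1`. Hence `f₁`, and with it every power of `f₁`, has trivial kernel, and local
nilpotence of `f₁` kills every element.
-/

namespace Monoid.End

variable {M : Type*} [Monoid M]

theorem eq_one_of_apply_eq_one_of_mul_apply_eq_self {f g : Monoid.End M}
    (hg : ∀ x, ∃ n : ℕ, (g ^ n) x = 1) {x : M} (hsum : f x * g x = x) (hx : f x = 1) :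
    x = 1 := by
  have hfix : Function.IsFixedPt g x := by rwa [hx, one_mul] at hsum
  obtain ⟨n, hn⟩ := hg x
  rwa [coe_pow, hfix.iterate n] at hn

theorem eq_one_of_pow_apply_eq_one {f : Monoid.End M} (hf : ∀ x, f x = 1 → x = 1) :
    ∀ (n : ℕ) {x : M}, (f ^ n) x = 1 → x = 1
  | 0, _, hx => hx
  | n + 1, x, hx => hf x (eq_one_of_pow_apply_eq_one hf n (by rwa [pow_succ] at hx))

end Monoid.End

theorem trivial_of_two_locally_nilpotent_complements_general (G : Type*) [Group G]
    (f₁ f₂ : Monoid.End G)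
    (hsum : ∀ x : G, f₁ x * f₂ x = x)
    (hn₁ : ∀ x : G, ∃ n : ℕ, 1 ≤ n ∧ (f₁ ^ n) x = 1)
    (hn₂ : ∀ x : G, ∃ n : ℕ, 1 ≤ n ∧ (f₂ ^ n) x = 1) :
    ∀ x : G, x = 1 := by
  have hker₁ : ∀ x, f₁ x = 1 → x = 1 := fun x =>
    Monoid.End.eq_one_of_apply_eq_one_of_mul_apply_eq_self
      (fun y => (hn₂ y).imp fun _ h => h.2) (hsum x)
  intro x
  obtain ⟨n, -, hn⟩ := hn₁ x
  exact Monoid.End.eq_one_of_pow_apply_eq_one hker₁ n hn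

/-- If `f₁, f₂` are locally nilpotent endomorphisms of `G` with elementwise-commuting
images whose pointwise product is the identity, then `G` is trivial. -/
theorem trivial_of_two_locally_nilpotent_complements (G : Type*) [Group G]
    (f₁ f₂ : Monoid.End G)
    (hcomm : ∀ x y : G, f₁ x * f₂ y = f₂ y * f₁ x)
    (hsum : ∀ x : G, f₁ x * f₂ x = x)
    (hn₁ : ∀ x : G, ∃ n : ℕ, 1 ≤ n ∧ (f₁ ^ n) x = 1)
    (hn₂ : ∀ x : G, ∃ n : ℕ, 1 ≤ n ∧ (f₂ ^ n) x = 1) :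
    ∀ x : G, x = 1 :=
  trivial_of_two_locally_nilpotent_complements_general G f₁ f₂ hsum hn₁ hn₂
end
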